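/- arXiv:2001.01154 — 3 statements merged into one kernel-verified Lean document; each statement's English description precedes it below -/
import Mathlib

section
/- Triangle inequality for upper angles (Proposition 2.1). Let X be a metric space and let γ : [0,T] → X, η : [0,S] → X, σ : [0,R] → X be unit-speed geodesics with T, S, R > 0 and γ(0) = η(0) = σ(0). Then ∠⁺(γ, η) ≤ ∠⁺(γ, σ) + ∠⁺(σ, η). (The paper states this for length spaces, but only the metric structure is used.) -/
/-! Given `a > ∠⁺(γ, σ)` and `b > ∠⁺(σ, η)` with `a + b < π`, take small `t, s`. In the Euclidean
triangle `0, t, s e^{i(a+b)}` the ray from `0` at angle `a` cuts the opposite side at some point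
`r e^{ia}` with `0 < r ≤ max t s`, so the law-of-cosines sides satisfy
`side(t, s, a + b) = side(t, r, a) + side(r, s, b)`. Since `∠⁰(γ t, σ r) < a` and
`∠⁰(σ r, η s) < b`, the triangle inequality gives
`d(γ t, η s) ≤ d(γ t, σ r) + d(σ r, η s) ≤ side(t, s, a + b)`, i.e. `∠⁰(γ t, η s) ≤ a + b`. -/

open Filter Topology Metric Set

noncomputable section

/-- `γ` is a unit-speed geodesic (shortest path) on the interval `[0, T]`:
the distance between any two of its points equals the parameter difference. -/
def IsUnitSpeedGeodesicOn {X : Type*} [MetricSpace X] (γ : ℝ → X) (T : ℝ) : Prop :=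
  ∀ t ∈ Set.Icc (0:ℝ) T, ∀ t' ∈ Set.Icc (0:ℝ) T, dist (γ t) (γ t') = |t - t'|

/-- The Euclidean comparison angle `∠⁰_p(x, y)` at the vertex `p`. -/
def compAngle {X : Type*} [MetricSpace X] (p x y : X) : ℝ :=
  Real.arccos ((dist p x ^ 2 + dist p y ^ 2 - dist x y ^ 2) /
    (2 * dist p x * dist p y))

/-- The upper angle `∠⁺(γ, η)` between two geodesics with `γ 0 = η 0`:
the limsup of comparison angles `∠⁰_{γ 0}(γ t, η s)` as `(t, s) → (0⁺, 0⁺)`. -/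
def upperAngle {X : Type*} [MetricSpace X] (γ η : ℝ → X) : ℝ :=
  Filter.limsup (fun ts : ℝ × ℝ => compAngle (γ 0) (γ ts.1) (η ts.2))
    ((𝓝[>] (0:ℝ)) ×ˢ (𝓝[>] (0:ℝ)))

/-- The lower angle `∠⁻(γ, η)`: liminf of comparison angles. -/
def lowerAngle {X : Type*} [MetricSpace X] (γ η : ℝ → X) : ℝ :=
  Filter.liminf (fun ts : ℝ × ℝ => compAngle (γ 0) (γ ts.1) (η ts.2))
    ((𝓝[>] (0:ℝ)) ×ˢ (𝓝[>] (0:ℝ)))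

/-- `U` is a region of curvature bounded by `0` in the comparison sense, where
`rel` is `≤` (curvature `≤ 0`) or `≥` (curvature `≥ 0`): any two points of `U`
are joined by a unit-speed shortest path with image in `U`, and for every
geodesic triangle contained in `U` and every Euclidean comparison triangle,
distances between pairs of points on the sides are related by `rel` to the
distances between the corresponding comparison points. -/
def IsCurvRegion {X : Type*} [MetricSpace X] (rel : ℝ → ℝ → Prop) (U : Set X) : Prop :=
  (∀ x ∈ U, ∀ y ∈ U, ∃ γ : ℝ → X, IsUnitSpeedGeodesicOn γ (dist x y) ∧
    γ 0 = x ∧ γ (dist x y) = y ∧ ∀ t ∈ Set.Icc (0:ℝ) (dist x y), γ t ∈ U) ∧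
  (∀ x ∈ U, ∀ y ∈ U, ∀ z ∈ U, ∀ p : Fin 3 → ℝ → X,
    (∀ i, IsUnitSpeedGeodesicOn (p i) (![dist x y, dist x z, dist y z] i) ∧
      p i 0 = (![(x, y), (x, z), (y, z)] i).1 ∧
      p i (![dist x y, dist x z, dist y z] i) = (![(x, y), (x, z), (y, z)] i).2 ∧
      ∀ t ∈ Set.Icc (0:ℝ) (![dist x y, dist x z, dist y z] i), p i t ∈ U) →
    ∀ xb yb zb : EuclideanSpace ℝ (Fin 2),
      dist xb yb = dist x y → dist xb zb = dist x z → dist yb zb = dist y z →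
      ∀ i j : Fin 3, ∀ a b : ℝ,
        a ∈ Set.Icc (0:ℝ) (![dist x y, dist x z, dist y z] i) →
        b ∈ Set.Icc (0:ℝ) (![dist x y, dist x z, dist y z] j) →
        rel (dist (p i a) (p j b))
          (dist
            (![fun c : ℝ => AffineMap.lineMap xb yb (c / dist x y),
               fun c : ℝ => AffineMap.lineMap xb zb (c / dist x z),
               fun c : ℝ => AffineMap.lineMap yb zb (c / dist y z)] i a)
            (![fun c : ℝ => AffineMap.lineMap xb yb (c / dist x y),
               fun c : ℝ => AffineMap.lineMap xb zb (c / dist x z),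
               fun c : ℝ => AffineMap.lineMap yb zb (c / dist y z)] j b)))

/-- A region of curvature `≤ 0`. -/
def IsCurvLeRegion {X : Type*} [MetricSpace X] (U : Set X) : Prop :=
  IsCurvRegion (· ≤ ·) U

/-- A region of curvature `≥ 0`. -/
def IsCurvGeRegion {X : Type*} [MetricSpace X] (U : Set X) : Prop :=
  IsCurvRegion (· ≥ ·) U

end

open Real

noncomputable def comparisonSide (x y θ : ℝ) : ℝ := √(x ^ 2 + y ^ 2 - 2 * x * y * cos θ)

lemma comparisonSide_eq_norm_sub (x y θ : ℝ) :
    comparisonSide x y θ = ‖(x : ℂ) - y * Complex.exp (θ * Complex.I)‖ := by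
  rw [comparisonSide, Complex.norm_def, Complex.normSq_apply]
  congr 1
  simp only [Complex.exp_mul_I, ← Complex.ofReal_cos, ← Complex.ofReal_sin, Complex.sub_re,
    Complex.sub_im, Complex.mul_re, Complex.mul_im, Complex.add_re, Complex.add_im,
    Complex.I_re, Complex.I_im, Complex.ofReal_re, Complex.ofReal_im]
  nlinarith [sin_sq_add_cos_sq θ]

lemma exists_comparisonSide_eq_add {a b t s : ℝ} (ha : 0 < a) (hb : 0 < b) (hab : a + b < π)
    (ht : 0 < t) (hs : 0 < s) :
    ∃ r ∈ Ioc 0 (max t s),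
      comparisonSide t s (a + b) = comparisonSide t r a + comparisonSide r s b := by
  have hsa : 0 < sin a := sin_pos_of_pos_of_lt_pi ha (by linarith)
  have hsb : 0 < sin b := sin_pos_of_pos_of_lt_pi hb (by linarith)
  have hsab : 0 < sin (a + b) := sin_pos_of_pos_of_lt_pi (by positivity) hab
  have hD : 0 < t * sin a + s * sin b := by positivity
  -- the ray from `0` at angle `a` meets the segment `[t, s e^{i(a+b)}]` at `r e^{ia}`,
  -- splitting it in the ratio `μ : 1 - μ`
  obtain ⟨μ, hμ⟩ : ∃ μ, μ = t * sin a / (t * sin a + s * sin b) := ⟨_, rfl⟩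
  obtain ⟨r, hr⟩ : ∃ r, r = t * s * sin (a + b) / (t * sin a + s * sin b) := ⟨_, rfl⟩
  have hμ0 : 0 ≤ μ := by rw [hμ]; positivity
  have hμ1 : 0 ≤ 1 - μ := by
    rw [hμ, sub_nonneg, div_le_one hD]; linarith [mul_pos hs hsb]
  have hre : r * cos a = (1 - μ) * t + μ * (s * cos (a + b)) := by
    have hsin : sin (a + b) * cos a - cos (a + b) * sin a = sin b := by
      rw [← sin_sub, add_sub_cancel_left]
    rw [hr, hμ]; field_simp; linear_combination s * hsin
  have him : r * sin a = μ * (s * sin (a + b)) := by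
    rw [hr, hμ]; field_simp
  have hW : (r : ℂ) * Complex.exp (a * Complex.I) =
      (1 - μ : ℝ) * (t : ℂ) + (μ : ℝ) * (s * Complex.exp ((a + b : ℝ) * Complex.I)) := by
    apply Complex.ext <;>
      simp only [Complex.exp_mul_I, ← Complex.ofReal_cos, ← Complex.ofReal_sin, Complex.add_re,
        Complex.add_im, Complex.mul_re, Complex.mul_im, Complex.I_re, Complex.I_im,
        Complex.ofReal_re, Complex.ofReal_im] <;>
      linarith
  have hAW : (t : ℂ) - r * Complex.exp (a * Complex.I) =
      (μ : ℝ) * (t - s * Complex.exp ((a + b : ℝ) * Complex.I)) := by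
    rw [hW]; push_cast; ring
  have hWB : (r : ℂ) * Complex.exp (a * Complex.I) - s * Complex.exp ((a + b : ℝ) * Complex.I) =
      (1 - μ : ℝ) * (t - s * Complex.exp ((a + b : ℝ) * Complex.I)) := by
    rw [hW]; push_cast; ring
  have hWB_rot : (r : ℂ) * Complex.exp (a * Complex.I) - s * Complex.exp ((a + b : ℝ) * Complex.I) =
      Complex.exp (a * Complex.I) * (r - s * Complex.exp (b * Complex.I)) := by
    push_cast; rw [add_mul, Complex.exp_add]; ring
  refine ⟨r, ⟨by rw [hr]; positivity, ?_⟩, ?_⟩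
  · have hsum : sin (a + b) ≤ sin a + sin b := by
      rw [sin_add]
      nlinarith [cos_le_one a, cos_le_one b]
    rw [hr, div_le_iff₀ hD]
    calc t * s * sin (a + b) ≤ s * (t * sin a) + t * (s * sin b) := by nlinarith [mul_pos ht hs]
      _ ≤ max t s * (t * sin a) + max t s * (s * sin b) := by
        gcongr
        exacts [le_max_right t s, le_max_left t s]
      _ = max t s * (t * sin a + s * sin b) := by ring
  · have h1 : comparisonSide t r a = μ * comparisonSide t s (a + b) := by
      rw [comparisonSide_eq_norm_sub, comparisonSide_eq_norm_sub, hAW, norm_mul,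
        Complex.norm_real, Real.norm_of_nonneg hμ0]
    have h2 : comparisonSide r s b = (1 - μ) * comparisonSide t s (a + b) := by
      rw [comparisonSide_eq_norm_sub, comparisonSide_eq_norm_sub, ← Real.norm_of_nonneg hμ1,
        ← Complex.norm_real, ← norm_mul, ← hWB, hWB_rot, norm_mul, Complex.norm_exp_ofReal_mul_I,
        one_mul]
    rw [h1, h2]; ring

section CompAngle

variable {X : Type*} [MetricSpace X]

lemma compAngle_nonneg (p x y : X) : 0 ≤ compAngle p x y := arccos_nonneg _

lemma compAngle_le_pi (p x y : X) : compAngle p x y ≤ π := arccos_le_pi _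

lemma compAngle_le_iff {p x y : X} {θ : ℝ} (hx : 0 < dist p x) (hy : 0 < dist p y)
    (hθ₀ : 0 ≤ θ) (hθπ : θ ≤ π) :
    compAngle p x y ≤ θ ↔ dist x y ≤ comparisonSide (dist p x) (dist p y) θ := by
  have h₀ : 0 < 2 * dist p x * dist p y := by positivity
  have hxy := dist_triangle x p y
  have hpx := dist_triangle p y x
  have hpy := dist_triangle p x y
  rw [dist_comm x p] at hxy
  rw [dist_comm y x] at hpx
  have hq : (dist p x ^ 2 + dist p y ^ 2 - dist x y ^ 2) / (2 * dist p x * dist p y) ∈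
      Icc (-1 : ℝ) 1 := by
    rw [mem_Icc, le_div_iff₀ h₀, div_le_one h₀]
    constructor <;> nlinarith [dist_nonneg (x := x) (y := y)]
  have hside : 0 ≤ dist p x ^ 2 + dist p y ^ 2 - 2 * dist p x * dist p y * cos θ := by
    nlinarith [cos_le_one θ, sq_nonneg (dist p x - dist p y)]
  conv_lhs => rw [compAngle, ← arccos_cos hθ₀ hθπ]
  rw [strictAntiOn_arccos.le_iff_ge hq ⟨neg_one_le_cos θ, cos_le_one θ⟩, le_div_iff₀ h₀,
    comparisonSide, le_sqrt dist_nonneg hside]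
  constructor <;> intro h <;> linarith

lemma compAngle_le_add_of_forall_dist_eq {p x y : X} {a b : ℝ} (ha : 0 < a) (hb : 0 < b)
    (hx : 0 < dist p x) (hy : 0 < dist p y)
    (h : ∀ r ∈ Ioc 0 (max (dist p x) (dist p y)),
      ∃ z, dist p z = r ∧ compAngle p x z ≤ a ∧ compAngle p z y ≤ b) :
    compAngle p x y ≤ a + b := by
  rcases le_or_gt π (a + b) with hπ | hπ
  · exact (compAngle_le_pi p x y).trans hπ
  obtain ⟨r, hr, hsplit⟩ := exists_comparisonSide_eq_add ha hb hπ hx hy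
  obtain ⟨z, hz, hxz, hzy⟩ := h r hr
  rw [← hz] at hr
  rw [compAngle_le_iff hx hy (by positivity) hπ.le, hsplit]
  rw [compAngle_le_iff hx hr.1 ha.le (by linarith), hz] at hxz
  rw [compAngle_le_iff hr.1 hy hb.le (by linarith), hz] at hzy
  linarith [dist_triangle x z y]

end CompAngle

lemma IsUnitSpeedGeodesicOn.dist_zero_eq {X : Type*} [MetricSpace X] {γ : ℝ → X} {T t : ℝ}
    (hγ : IsUnitSpeedGeodesicOn γ T) (ht : t ∈ Icc 0 T) : dist (γ 0) (γ t) = t := by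
  rw [hγ 0 ⟨le_rfl, ht.1.trans ht.2⟩ t ht, zero_sub, abs_neg, abs_of_nonneg ht.1]

section UpperAngle

variable {X : Type*} [MetricSpace X] {γ η : ℝ → X} {a : ℝ}

lemma isBoundedUnder_le_compAngle (γ η : ℝ → X) :
    IsBoundedUnder (· ≤ ·) (𝓝[>] (0 : ℝ) ×ˢ 𝓝[>] 0)
      (fun ts : ℝ × ℝ => compAngle (γ 0) (γ ts.1) (η ts.2)) :=
  isBoundedUnder_of ⟨π, fun _ => compAngle_le_pi _ _ _⟩

lemma upperAngle_nonneg (γ η : ℝ → X) : 0 ≤ upperAngle γ η :=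
  le_limsup_of_frequently_le (Frequently.of_forall fun _ => compAngle_nonneg _ _ _)
    (isBoundedUnder_le_compAngle γ η)

lemma eventually_compAngle_lt_of_upperAngle_lt (h : upperAngle γ η < a) :
    ∀ᶠ ts : ℝ × ℝ in 𝓝[>] 0 ×ˢ 𝓝[>] 0, compAngle (γ 0) (γ ts.1) (η ts.2) < a :=
  eventually_lt_of_limsup_lt h (isBoundedUnder_le_compAngle γ η)

lemma upperAngle_le_of_eventually_compAngle_le
    (h : ∀ᶠ ts : ℝ × ℝ in 𝓝[>] 0 ×ˢ 𝓝[>] 0, compAngle (γ 0) (γ ts.1) (η ts.2) ≤ a) :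
    upperAngle γ η ≤ a :=
  limsup_le_of_le (isCoboundedUnder_le_of_le _ fun _ => compAngle_nonneg _ _ _) h

end UpperAngle

lemma eventually_compAngle_le_add {X : Type*} [MetricSpace X] {T S R : ℝ} (hT : 0 < T)
    (hS : 0 < S) (hR : 0 < R) {γ η σ : ℝ → X} (hγ : IsUnitSpeedGeodesicOn γ T)
    (hη : IsUnitSpeedGeodesicOn η S) (hσ : IsUnitSpeedGeodesicOn σ R) (hγη : γ 0 = η 0)
    (hγσ : γ 0 = σ 0) {a b : ℝ} (ha : upperAngle γ σ < a) (hb : upperAngle σ η < b) :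
    ∀ᶠ ts : ℝ × ℝ in 𝓝[>] 0 ×ˢ 𝓝[>] 0, compAngle (γ 0) (γ ts.1) (η ts.2) ≤ a + b := by
  obtain ⟨U, hU, hUab⟩ := eventually_prod_self_iff'.1
    ((eventually_compAngle_lt_of_upperAngle_lt ha).and
      (eventually_compAngle_lt_of_upperAngle_lt hb))
  obtain ⟨δ, hδ, hδU⟩ := mem_nhdsGT_iff_exists_Ioo_subset.1 hU
  obtain ⟨ε, hε, hεU, hεT, hεS, hεR⟩ : ∃ ε > 0, Ioo 0 ε ⊆ U ∧ ε ≤ T ∧ ε ≤ S ∧ ε ≤ R :=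
    ⟨min δ (min T (min S R)), lt_min hδ (lt_min hT (lt_min hS hR)),
      (Ioo_subset_Ioo_right (min_le_left _ _)).trans hδU, by simp⟩
  refine eventually_prod_self_iff'.2 ⟨Ioo 0 ε, Ioo_mem_nhdsGT hε, fun t ht s hs => ?_⟩
  have hγt : dist (γ 0) (γ t) = t := hγ.dist_zero_eq ⟨ht.1.le, ht.2.le.trans hεT⟩
  have hηs : dist (γ 0) (η s) = s := hγη ▸ hη.dist_zero_eq ⟨hs.1.le, hs.2.le.trans hεS⟩
  show compAngle (γ 0) (γ t) (η s) ≤ a + b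
  refine compAngle_le_add_of_forall_dist_eq ((upperAngle_nonneg γ σ).trans_lt ha)
    ((upperAngle_nonneg σ η).trans_lt hb) (hγt.symm ▸ ht.1) (hηs.symm ▸ hs.1) ?_
  rw [hγt, hηs]
  rintro r ⟨hr₀, hr⟩
  have hrε : r ∈ Ioo 0 ε := ⟨hr₀, hr.trans_lt (max_lt ht.2 hs.2)⟩
  refine ⟨σ r, hγσ ▸ hσ.dist_zero_eq ⟨hr₀.le, hrε.2.le.trans hεR⟩,
    (hUab t (hεU ht) r (hεU hrε)).1.le, ?_⟩
  rw [hγσ]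
  exact (hUab r (hεU hrε) s (hεU hs)).2.le

/-- Proposition 2.1: triangle inequality for upper angles. -/
theorem upperAngle_triangle_inequality {X : Type*} [MetricSpace X]
    {T S R : ℝ} (hT : 0 < T) (hS : 0 < S) (hR : 0 < R)
    (γ η σ : ℝ → X)
    (hγ : IsUnitSpeedGeodesicOn γ T) (hη : IsUnitSpeedGeodesicOn η S)
    (hσ : IsUnitSpeedGeodesicOn σ R)
    (hγη : γ 0 = η 0) (hγσ : γ 0 = σ 0) :
    upperAngle γ η ≤ upperAngle γ σ + upperAngle σ η := by
  refine le_of_forall_pos_le_add fun ε hε => ?_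
  have h := upperAngle_le_of_eventually_compAngle_le <|
    eventually_compAngle_le_add hT hS hR hγ hη hσ hγη hγσ
      (a := upperAngle γ σ + ε / 2) (b := upperAngle σ η + ε / 2) (by linarith) (by linarith)
  linarith
end

section
/- Thin-triangle cosine lemma, spherical case (Lemma 2.2, k > 0). Let X be a metric space, let γ : [0,T] → X and η : [0,S] → X be unit-speed geodesics with γ(0) = η(0), let k > 0, and fix s with 0 < s < π/√k and s ≤ S. Set d(t) := dist(γ(t), η(s)) and let cθ_k(t) := (cos(d(t)·√k) − cos(t·√k)·cos(s·√k)) / (sin(t·√k)·sin(s·√k)), which by the spherical law of cosines is the cosine of the comparison angle at γ(0) in the 2-sphere of curvature k. Then lim_{t→0⁺} | cθ_k(t) − (s − d(t))/t | = 0. -/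
open Filter Topology Metric Set

/-!
By the triangle inequality `d(t) = s + e` with `|e| ≤ t`. Expanding `cos ((s + e)√k)`, the
difference `cθ_k(t) - (s - d(t))/t` splits into `cot(s√k) (cos(e√k) - cos(t√k)) / sin(t√k)`, which
is `O(t)` because both cosines are `1 - O(t²)`, and a term comparing `sin(e√k)/sin(t√k)` with `e/t`,
which is `O(t²)` because `sin x = x + O(x³)`.
-/

namespace Real

lemma abs_cos_sub_cos_le_sq_div_two {x y : ℝ} (hxy : |x| ≤ y) :
    |cos x - cos y| ≤ y ^ 2 / 2 := by
  have hx : 1 - y ^ 2 / 2 ≤ cos x := by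
    have := one_sub_sq_div_two_le_cos (x := x)
    nlinarith [sq_abs x, abs_nonneg x]
  rw [abs_le]
  constructor <;> linarith [cos_le_one x, cos_le_one y, one_sub_sq_div_two_le_cos (x := y)]

lemma abs_mul_sin_sub_mul_sin_le {x y : ℝ} (hxy : |x| ≤ y) :
    |y * sin x - x * sin y| ≤ y ^ 4 / 3 := by
  have hy : 0 ≤ y := (abs_nonneg x).trans hxy
  calc |y * sin x - x * sin y| = |x * (y - sin y) - y * (x - sin x)| := by ring_nf
    _ ≤ |x| * |y - sin y| + y * |x - sin x| := by
        grw [abs_sub, abs_mul, abs_mul, abs_of_nonneg hy]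
    _ ≤ y * (y ^ 3 / 6) + y * (y ^ 3 / 6) := by
        gcongr
        · simpa [abs_of_nonneg hy] using abs_sub_sin_le y
        · exact (abs_sub_sin_le x).trans (by gcongr)
    _ = y ^ 4 / 3 := by ring

/-- In a spherical triangle with sides `y`, `a` and `a + x`, the cosine of the angle opposite
`a + x` is `-x / y` up to `O(y)`. -/
lemma abs_cos_add_sub_cos_mul_cos_div_add_div_le {a x y : ℝ} (ha : sin a ≠ 0) (hy : 0 < y)
    (hyπ : y ≤ π / 2) (hxy : |x| ≤ y) :
    |(cos (a + x) - cos y * cos a) / (sin y * sin a) + x / y|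
      ≤ π / 4 * (|cos a / sin a| + y) * y := by
  have hsin_lb : 2 / π * y ≤ sin y := mul_le_sin hy.le hyπ
  have hsin : 0 < sin y := lt_of_lt_of_le (by positivity) hsin_lb
  have hsplit : (cos (a + x) - cos y * cos a) / (sin y * sin a) + x / y
      = cos a / sin a * ((cos x - cos y) / sin y) - (y * sin x - x * sin y) / (y * sin y) := by
    rw [cos_add]
    field_simp
    ring
  have hcos : |(cos x - cos y) / sin y| ≤ π / 4 * y := by
    rw [abs_div, abs_of_pos hsin, div_le_iff₀ hsin]
    calc |cos x - cos y| ≤ y ^ 2 / 2 := abs_cos_sub_cos_le_sq_div_two hxy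
      _ = π / 4 * y * (2 / π * y) := by field_simp; ring
      _ ≤ π / 4 * y * sin y := by gcongr
  have hsin_ratio : |(y * sin x - x * sin y) / (y * sin y)| ≤ π / 4 * y * y := by
    rw [abs_div, abs_of_pos (mul_pos hy hsin), div_le_iff₀ (mul_pos hy hsin)]
    calc |y * sin x - x * sin y| ≤ y ^ 4 / 3 := abs_mul_sin_sub_mul_sin_le hxy
      _ ≤ π / 4 * y * y * (y * (2 / π * y)) := by
          field_simp
          nlinarith [pow_pos hy 4]
      _ ≤ π / 4 * y * y * (y * sin y) := by gcongr
  calc _ = |cos a / sin a * ((cos x - cos y) / sin y)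
          - (y * sin x - x * sin y) / (y * sin y)| := by rw [hsplit]
    _ ≤ |cos a / sin a| * (π / 4 * y) + π / 4 * y * y := by
        grw [abs_sub, abs_mul, hcos, hsin_ratio]
    _ = π / 4 * (|cos a / sin a| + y) * y := by ring

end Real

namespace IsUnitSpeedGeodesicOn

variable {X : Type*} [MetricSpace X] {γ : ℝ → X} {T t : ℝ}

lemma dist_zero_self (hγ : IsUnitSpeedGeodesicOn γ T) (ht : t ∈ Icc 0 T) :
    dist (γ 0) (γ t) = t := by
  rw [hγ 0 ⟨le_rfl, ht.1.trans ht.2⟩ t ht, zero_sub, abs_neg, abs_of_nonneg ht.1]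

lemma abs_dist_sub_dist_zero_le (hγ : IsUnitSpeedGeodesicOn γ T) (ht : t ∈ Icc 0 T) (p : X) :
    |dist (γ t) p - dist (γ 0) p| ≤ t := by
  calc |dist (γ t) p - dist (γ 0) p| ≤ dist (γ t) (γ 0) := abs_dist_sub_le _ _ _
    _ = t := by rw [dist_comm, hγ.dist_zero_self ht]

end IsUnitSpeedGeodesicOn

open Real in
/-- Lemma 2.2, spherical case (`k > 0`): the thin-triangle cosine lemma. -/
theorem thinTriangle_cosine_spherical {X : Type*} [MetricSpace X]
    {T S : ℝ} (hT : 0 < T)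
    (γ η : ℝ → X)
    (hγ : IsUnitSpeedGeodesicOn γ T) (hη : IsUnitSpeedGeodesicOn η S)
    (hγη : γ 0 = η 0)
    {k : ℝ} (hk : 0 < k)
    {s : ℝ} (hs0 : 0 < s) (hsk : s < Real.pi / Real.sqrt k) (hsS : s ≤ S) :
    Filter.Tendsto
      (fun t : ℝ =>
        |(Real.cos (dist (γ t) (η s) * Real.sqrt k)
            - Real.cos (t * Real.sqrt k) * Real.cos (s * Real.sqrt k))
            / (Real.sin (t * Real.sqrt k) * Real.sin (s * Real.sqrt k))
          - (s - dist (γ t) (η s)) / t|)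
      (𝓝[>] (0:ℝ)) (𝓝 0) := by
  set K := √k
  have hK : 0 < K := sqrt_pos.mpr hk
  have hsin : sin (s * K) ≠ 0 :=
    (sin_pos_of_pos_of_lt_pi (by positivity) ((lt_div_iff₀ hK).mp hsk)).ne'
  have hdist_s : dist (γ 0) (η s) = s := by rw [hγη, hη.dist_zero_self ⟨hs0.le, hsS⟩]
  set C := |cos (s * K) / sin (s * K)|
  refine squeeze_zero' (.of_forall fun _ => abs_nonneg _) ?_
    (g := fun t => π / 4 * (C + t * K) * (t * K)) ?_
  · filter_upwards [Ioo_mem_nhdsGT (lt_min hT (div_pos pi_div_two_pos hK))] with t ⟨ht0, htδ⟩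
    have htK : t * K ≤ π / 2 := (le_div_iff₀ hK).mp (htδ.le.trans (min_le_right _ _))
    have hd : |(dist (γ t) (η s) - s) * K| ≤ t * K := by
      rw [abs_mul, abs_of_pos hK]
      gcongr
      nth_rewrite 2 [← hdist_s]
      exact hγ.abs_dist_sub_dist_zero_le ⟨ht0.le, htδ.le.trans (min_le_left _ _)⟩ _
    have hdK : dist (γ t) (η s) * K = s * K + (dist (γ t) (η s) - s) * K := by ring
    have hratio : (s - dist (γ t) (η s)) / t = -((dist (γ t) (η s) - s) * K / (t * K)) := by
      field_simp
      ring
    rw [hdK, hratio, sub_neg_eq_add]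
    exact abs_cos_add_sub_cos_mul_cos_div_add_div_le hsin (by positivity) htK hd
  · have hg : Continuous fun t => π / 4 * (C + t * K) * (t * K) := by fun_prop
    simpa using (hg.tendsto 0).mono_left nhdsWithin_le_nhds
end

section
/- Existence of angles under an upper curvature bound (Lemma 3.1, curvature ≤ 0 case). Let X be a metric space, let U ⊆ X be a region of curvature ≤ 0, and let γ : [0,T] → X and η : [0,S] → X be unit-speed geodesics with γ(0) = η(0) whose images are contained in U. Then the angle between γ and η exists, i.e. ∠⁺(γ, η) = ∠⁻(γ, η), and its value equals lim_{t→0⁺} ∠⁰_{γ(0)}(γ(t), η(t)). -/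
open Filter Topology Metric Set

/-!
In a region of curvature `≤ 0` the comparison angle `∠⁰_p(γ t, η s)` is nondecreasing in each
of `t` and `s`: in the geodesic triangle `p, γ t, η s` the point `γ t'` (`t' ≤ t`) is no farther
from `η s` than its model point on the Euclidean comparison triangle, and the Euclidean angle at
`p̄` does not change along the side `p̄ x̄`. A function on `(0, T] × (0, S]` that is monotone for
the product order and bounded below tends to its infimum as `(t, s) → (0⁺, 0⁺)`, so the upper and
lower angles coincide and the diagonal comparison angles converge to the same value.
-/

open EuclideanGeometry

theorem MonotoneOn.tendsto_csInf_nhdsGT_prod {α β δ : Type*} [LinearOrder α] [TopologicalSpace α]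
    [OrderTopology α] [LinearOrder β] [TopologicalSpace β] [OrderTopology β]
    [ConditionallyCompleteLinearOrder δ] [TopologicalSpace δ] [OrderTopology δ]
    {f : α × β → δ} {a a' : α} {b b' : β} (ha : a < a') (hb : b < b')
    (hf : MonotoneOn f (Ioc a a' ×ˢ Ioc b b')) (hbdd : BddBelow (f '' (Ioc a a' ×ˢ Ioc b b'))) :
    Tendsto f (𝓝[>] a ×ˢ 𝓝[>] b) (𝓝 (sInf (f '' (Ioc a a' ×ˢ Ioc b b')))) := by
  have hne : (Ioc a a' ×ˢ Ioc b b').Nonempty := ⟨(a', b'), ⟨ha, le_rfl⟩, ⟨hb, le_rfl⟩⟩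
  refine tendsto_order.2 ⟨fun l hl => ?_, fun u hu => ?_⟩
  · filter_upwards [prod_mem_prod (Ioc_mem_nhdsGT ha) (Ioc_mem_nhdsGT hb)] with q hq
    exact hl.trans_le (csInf_le hbdd (mem_image_of_mem f hq))
  · obtain ⟨_, ⟨q, hq, rfl⟩, hqu⟩ := exists_lt_of_csInf_lt (hne.image f) hu
    filter_upwards [prod_mem_prod (Ioc_mem_nhdsGT hq.1.1) (Ioc_mem_nhdsGT hq.2.1)] with r hr
    refine (hf ⟨⟨hr.1.1, hr.1.2.trans hq.1.2⟩, ⟨hr.2.1, hr.2.2.trans hq.2.2⟩⟩ hq ?_).trans_lt hqu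
    exact ⟨hr.1.2, hr.2.2⟩

theorem exists_euclideanSpace_triangle {a b c : ℝ} (hc : c ≤ a + b) (hb : b ≤ a + c)
    (ha : a ≤ b + c) : ∃ p x y : EuclideanSpace ℝ (Fin 2),
      dist p x = a ∧ dist p y = b ∧ dist x y = c := by
  -- `u` is the abscissa of `y` when `p = 0` and `x = (a, 0)`
  set u := (a ^ 2 + b ^ 2 - c ^ 2) / (2 * a)
  have ha₀ : 0 ≤ a := by linarith
  have hb₀ : 0 ≤ b := by linarith
  have hc₀ : 0 ≤ c := by linarith
  have hau : 0 < a ∧ 2 * a * u = a ^ 2 + b ^ 2 - c ^ 2 ∨ a = 0 ∧ u = 0 := by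
    obtain rfl | ha := ha₀.eq_or_lt
    · simp [u]
    · exact .inl ⟨ha, mul_div_cancel₀ _ (by positivity)⟩
  have hu : u ^ 2 ≤ b ^ 2 := by
    obtain ⟨ha, h⟩ | ⟨-, hu⟩ := hau
    · have : (2 * a * u) ^ 2 ≤ (2 * a * b) ^ 2 := by
        rw [h]; apply sq_le_sq' <;> nlinarith
      rw [mul_pow, mul_pow (2 * a)] at this
      exact le_of_mul_le_mul_left this (by positivity)
    · simp [hu, sq_nonneg]
  refine ⟨0, !₂[a, 0], !₂[u, √(b ^ 2 - u ^ 2)], ?_, ?_, ?_⟩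
  · simp [EuclideanSpace.dist_eq, ha₀]
  · simp [EuclideanSpace.dist_eq, Real.sq_sqrt (sub_nonneg.2 hu), hb₀]
  · simp [EuclideanSpace.dist_eq, Real.sq_sqrt (sub_nonneg.2 hu), Real.dist_eq, sq_abs]
    rw [Real.sqrt_eq_iff_eq_sq (by positivity) hc₀]
    obtain ⟨-, h⟩ | ⟨rfl, hu⟩ := hau
    · linear_combination -h
    · rw [hu, le_antisymm (by linarith) (by linarith : b ≤ c)]
      ring

theorem exists_comparison_triangle {X : Type*} [MetricSpace X] (p x y : X) :
    ∃ p' x' y' : EuclideanSpace ℝ (Fin 2),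
      dist p' x' = dist p x ∧ dist p' y' = dist p y ∧ dist x' y' = dist x y :=
  exists_euclideanSpace_triangle (dist_triangle_left x y p) (dist_triangle p x y)
    (dist_triangle_right p x y)

theorem compAngle_comm {X : Type*} [MetricSpace X] (p x y : X) :
    compAngle p x y = compAngle p y x := by
  rw [compAngle, compAngle, dist_comm x y, add_comm (dist p x ^ 2), mul_right_comm]

theorem compAngle_le_compAngle {X Y : Type*} [MetricSpace X] [MetricSpace Y]
    {p x y : X} {p' x' y' : Y} (hpx : dist p x = dist p' x') (hpy : dist p y = dist p' y')
    (hxy : dist x y ≤ dist x' y') : compAngle p x y ≤ compAngle p' x' y' := by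
  rw [compAngle, compAngle, hpx, hpy]
  gcongr

theorem compAngle_eq_angle {V P : Type*} [NormedAddCommGroup V] [InnerProductSpace ℝ V]
    [MetricSpace P] [NormedAddTorsor V P] (p x y : P) : compAngle p x y = ∠ x p y := by
  rw [compAngle, EuclideanGeometry.angle, InnerProductGeometry.angle, dist_comm p x,
    dist_comm p y, dist_eq_norm_vsub V x p, dist_eq_norm_vsub V y p, dist_eq_norm_vsub V x y,
    ← vsub_sub_vsub_cancel_right x y p, norm_sub_sq_real]
  congr 1
  ring

theorem compAngle_lineMap_left {V P : Type*} [NormedAddCommGroup V] [InnerProductSpace ℝ V]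
    [MetricSpace P] [NormedAddTorsor V P] (p x y : P) {r : ℝ} (hr : 0 < r) :
    compAngle p (AffineMap.lineMap p x r) y = compAngle p x y := by
  rw [compAngle_eq_angle, compAngle_eq_angle]
  exact angle_smul_left_of_pos y hr (AffineMap.lineMap_vsub_left p x r).symm

section Geodesic

variable {X : Type*} [MetricSpace X] {U : Set X}

def IsGeodesicSegmentIn (U : Set X) (σ : ℝ → X) (x y : X) : Prop :=
  IsUnitSpeedGeodesicOn σ (dist x y) ∧ σ 0 = x ∧ σ (dist x y) = y ∧
    ∀ t ∈ Icc (0:ℝ) (dist x y), σ t ∈ U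

theorem IsUnitSpeedGeodesicOn.dist_zero_apply {γ : ℝ → X} {T t : ℝ}
    (hγ : IsUnitSpeedGeodesicOn γ T) (ht : t ∈ Icc 0 T) : dist (γ 0) (γ t) = t := by
  rw [hγ 0 ⟨le_rfl, ht.1.trans ht.2⟩ t ht, zero_sub, abs_neg, abs_of_nonneg ht.1]

theorem IsUnitSpeedGeodesicOn.mono {γ : ℝ → X} {T T' : ℝ} (hγ : IsUnitSpeedGeodesicOn γ T)
    (h : T' ≤ T) : IsUnitSpeedGeodesicOn γ T' :=
  fun t ht t' ht' => hγ t (Icc_subset_Icc_right h ht) t' (Icc_subset_Icc_right h ht')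

theorem IsUnitSpeedGeodesicOn.isGeodesicSegmentIn {γ : ℝ → X} {T t : ℝ}
    (hγ : IsUnitSpeedGeodesicOn γ T) (hγU : ∀ t ∈ Icc (0:ℝ) T, γ t ∈ U) (ht : t ∈ Icc 0 T) :
    IsGeodesicSegmentIn U γ (γ 0) (γ t) := by
  rw [IsGeodesicSegmentIn, hγ.dist_zero_apply ht]
  exact ⟨hγ.mono ht.2, rfl, rfl, fun s hs => hγU s (Icc_subset_Icc_right ht.2 hs)⟩

theorem IsCurvLeRegion.dist_le_of_hinge (hU : IsCurvLeRegion U) {p x y : X}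
    {σ τ : ℝ → X} (hσ : IsGeodesicSegmentIn U σ p x) (hτ : IsGeodesicSegmentIn U τ p y)
    {p' x' y' : EuclideanSpace ℝ (Fin 2)} (hpx : dist p' x' = dist p x)
    (hpy : dist p' y' = dist p y) (hxy : dist x' y' = dist x y) {a b : ℝ}
    (ha : a ∈ Icc 0 (dist p x)) (hb : b ∈ Icc 0 (dist p y)) :
    dist (σ a) (τ b) ≤
      dist (AffineMap.lineMap p' x' (a / dist p x)) (AffineMap.lineMap p' y' (b / dist p y)) := by
  have hp : p ∈ U := hσ.2.1 ▸ hσ.2.2.2 0 ⟨le_rfl, dist_nonneg⟩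
  have hx : x ∈ U := hσ.2.2.1 ▸ hσ.2.2.2 _ ⟨dist_nonneg, le_rfl⟩
  have hy : y ∈ U := hτ.2.2.1 ▸ hτ.2.2.2 _ ⟨dist_nonneg, le_rfl⟩
  obtain ⟨ρ, hρ⟩ := hU.1 x hx y hy
  refine hU.2 p hp x hx y hy ![σ, τ, ρ] ?_ p' x' y' hpx hpy hxy 0 1 a b ha hb
  intro i
  fin_cases i
  exacts [hσ, hτ, hρ]

theorem IsCurvLeRegion.compAngle_le (hU : IsCurvLeRegion U) {p x y : X}
    {σ τ : ℝ → X} (hσ : IsGeodesicSegmentIn U σ p x) (hτ : IsGeodesicSegmentIn U τ p y)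
    {a : ℝ} (ha : a ∈ Ioc 0 (dist p x)) : compAngle p (σ a) y ≤ compAngle p x y := by
  obtain ⟨p', x', y', hpx, hpy, hxy⟩ := exists_comparison_triangle p x y
  have hpx₀ : 0 < dist p x := ha.1.trans_le ha.2
  have hy' : AffineMap.lineMap p' y' (dist p y / dist p y) = y' := by
    obtain h | h := eq_or_ne (dist p y) 0
    · rw [h, div_zero, AffineMap.lineMap_apply_zero, ← dist_eq_zero, hpy, h]
    · rw [div_self h, AffineMap.lineMap_apply_one]
  have hcomp := hU.dist_le_of_hinge hσ hτ hpx hpy hxy (Ioc_subset_Icc_self ha)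
    ⟨dist_nonneg, le_rfl⟩
  rw [hτ.2.2.1, hy'] at hcomp
  calc compAngle p (σ a) y
      ≤ compAngle p' (AffineMap.lineMap p' x' (a / dist p x)) y' := by
        refine compAngle_le_compAngle ?_ hpy.symm hcomp
        rw [dist_left_lineMap, hpx, Real.norm_of_nonneg (div_pos ha.1 hpx₀).le,
          div_mul_cancel₀ _ hpx₀.ne', ← hσ.2.1, hσ.1.dist_zero_apply (Ioc_subset_Icc_self ha)]
    _ = compAngle p' x' y' := compAngle_lineMap_left p' x' y' (div_pos ha.1 hpx₀)
    _ = compAngle p x y := by rw [compAngle, compAngle, hpx, hpy, hxy]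

variable {γ η : ℝ → X} {T S : ℝ}

theorem IsCurvLeRegion.compAngle_le_of_le (hU : IsCurvLeRegion U)
    (hγ : IsUnitSpeedGeodesicOn γ T) (hη : IsUnitSpeedGeodesicOn η S) (hγη : γ 0 = η 0)
    (hγU : ∀ t ∈ Icc (0:ℝ) T, γ t ∈ U) (hηU : ∀ s ∈ Icc (0:ℝ) S, η s ∈ U)
    {t t' s : ℝ} (ht' : t' ∈ Ioc 0 t) (ht : t ∈ Icc 0 T) (hs : s ∈ Icc 0 S) :
    compAngle (γ 0) (γ t') (η s) ≤ compAngle (γ 0) (γ t) (η s) := by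
  have hηseg := hη.isGeodesicSegmentIn hηU hs
  rw [← hγη] at hηseg
  exact hU.compAngle_le (hγ.isGeodesicSegmentIn hγU ht) hηseg (by rwa [hγ.dist_zero_apply ht])

theorem IsCurvLeRegion.monotoneOn_compAngle (hU : IsCurvLeRegion U)
    (hγ : IsUnitSpeedGeodesicOn γ T) (hη : IsUnitSpeedGeodesicOn η S) (hγη : γ 0 = η 0)
    (hγU : ∀ t ∈ Icc (0:ℝ) T, γ t ∈ U) (hηU : ∀ s ∈ Icc (0:ℝ) S, η s ∈ U) :
    MonotoneOn (fun ts : ℝ × ℝ => compAngle (γ 0) (γ ts.1) (η ts.2)) (Ioc 0 T ×ˢ Ioc 0 S) := by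
  rintro ⟨t', s'⟩ ⟨ht', hs'⟩ ⟨t, s⟩ ⟨ht, hs⟩ ⟨htt, hss⟩
  calc compAngle (γ 0) (γ t') (η s')
      ≤ compAngle (γ 0) (γ t) (η s') :=
        hU.compAngle_le_of_le hγ hη hγη hγU hηU ⟨ht'.1, htt⟩ (Ioc_subset_Icc_self ht)
          (Ioc_subset_Icc_self hs')
    _ ≤ compAngle (γ 0) (γ t) (η s) := by
        rw [compAngle_comm, compAngle_comm _ (γ t), hγη]
        exact hU.compAngle_le_of_le hη hγ hγη.symm hηU hγU ⟨hs'.1, hss⟩ (Ioc_subset_Icc_self hs)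
          (Ioc_subset_Icc_self ht)

end Geodesic

/-- Lemma 3.1, curvature `≤ 0` case: the angle between two geodesics exists
and equals the limit of the diagonal comparison angles. -/
theorem angle_exists_of_curvLe {X : Type*} [MetricSpace X]
    {U : Set X} (hU : IsCurvLeRegion U)
    {T S : ℝ} (hT : 0 < T) (hS : 0 < S)
    (γ η : ℝ → X)
    (hγ : IsUnitSpeedGeodesicOn γ T) (hη : IsUnitSpeedGeodesicOn η S)
    (hγη : γ 0 = η 0)
    (hγU : ∀ t ∈ Set.Icc (0:ℝ) T, γ t ∈ U)
    (hηU : ∀ s ∈ Set.Icc (0:ℝ) S, η s ∈ U) :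
    upperAngle γ η = lowerAngle γ η ∧
    Filter.Tendsto (fun t : ℝ => compAngle (γ 0) (γ t) (η t)) (𝓝[>] (0:ℝ))
      (𝓝 (upperAngle γ η)) := by
  have hlim := (hU.monotoneOn_compAngle hγ hη hγη hγU hηU).tendsto_csInf_nhdsGT_prod hT hS
    ⟨0, forall_mem_image.2 fun _ _ => Real.arccos_nonneg _⟩
  have hupper : upperAngle γ η = _ := hlim.limsup_eq
  have hdiag := hlim.comp tendsto_diag
  refine ⟨hupper.trans hlim.liminf_eq.symm, ?_⟩
  rw [hupper]
  exact hdiag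
end
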